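/- The density topology on ℝ is countably orthocompact: every countable open cover of (ℝ, 𝒯) has an interior-preserving open refinement. -/

import Mathlib

open MeasureTheory Set Filter Topology

/-- `x` is a Lebesgue density point of `E`. -/
def IsDensityPoint (E : Set ℝ) (x : ℝ) : Prop :=
  Tendsto (fun h : ℝ => volume (E ∩ Icc (x - h) (x + h)) / ENNReal.ofReal (2 * h))
    (nhdsWithin 0 (Ioi 0)) (nhds 1)

/-- `E` is open in the density topology. -/
def DensityOpen (E : Set ℝ) : Prop :=
  MeasurableSet E ∧ ∀ x ∈ E, IsDensityPoint E x

open scoped ENNReal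

lemma vol_Icc (x h : ℝ) : volume (Icc (x - h) (x + h)) = ENNReal.ofReal (2 * h) := by
  rw [Real.volume_Icc]; ring_nf

lemma isDensityPoint_congr {A B : Set ℝ} {x : ℝ} (hAB : A =ᵐ[volume] B)
    (hA : IsDensityPoint A x) : IsDensityPoint B x := by
  have : ∀ h : ℝ, volume (A ∩ Icc (x - h) (x + h)) = volume (B ∩ Icc (x - h) (x + h)) :=
    fun h => measure_congr (hAB.inter (Filter.EventuallyEq.rfl))
  unfold IsDensityPoint at *
  simpa only [this] using hA

lemma isDensityPoint_of_isOpen {G : Set ℝ} (hG : IsOpen G) {x : ℝ} (hx : x ∈ G) :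
    IsDensityPoint G x := by
  obtain ⟨ε, hε, hball⟩ := Metric.isOpen_iff.1 hG x hx
  have key : ∀ h : ℝ, h ∈ Ioo (0:ℝ) ε →
      volume (G ∩ Icc (x - h) (x + h)) / ENNReal.ofReal (2 * h) = 1 := by
    intro h hh
    have hsub : Icc (x - h) (x + h) ⊆ G := fun y hy => by
      apply hball
      rw [Real.ball_eq_Ioo]
      exact ⟨lt_of_lt_of_le (by linarith [hh.2]) hy.1, lt_of_le_of_lt hy.2 (by linarith [hh.2])⟩
    rw [inter_eq_self_of_subset_right hsub, vol_Icc]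
    exact ENNReal.div_self (by simp [ENNReal.ofReal_pos]; linarith [hh.1]) ENNReal.ofReal_ne_top
  refine Tendsto.congr' ?_ (tendsto_const_nhds : Tendsto (fun _ : ℝ => (1:ℝ≥0∞)) (𝓝[>] (0:ℝ)) (𝓝 1))
  filter_upwards [Ioo_mem_nhdsGT_of_mem (Set.left_mem_Ico.2 hε)] with h hh
  exact (key h hh).symm

lemma densityOpen_of_isOpen {G : Set ℝ} (hG : IsOpen G) : DensityOpen G :=
  ⟨hG.measurableSet, fun _ hx => isDensityPoint_of_isOpen hG hx⟩

lemma densityOpen_empty : DensityOpen (∅ : Set ℝ) := densityOpen_of_isOpen isOpen_empty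

lemma densityOpen_univ : DensityOpen (univ : Set ℝ) := densityOpen_of_isOpen isOpen_univ

lemma densityOpen_inter {A B : Set ℝ} (hA : DensityOpen A) (hB : DensityOpen B) :
    DensityOpen (A ∩ B) := by
  refine ⟨hA.1.inter hB.1, fun x hx => ?_⟩
  have hA' := hA.2 x hx.1
  have hB' := hB.2 x hx.2
  set f : Set ℝ → ℝ → ℝ≥0∞ :=
    fun E h => volume (E ∩ Icc (x - h) (x + h)) / ENNReal.ofReal (2 * h) with hf
  have hlow : Tendsto (fun h : ℝ => f A h + f B h - 1) (𝓝[>] (0:ℝ)) (𝓝 1) := by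
    have h2 : Tendsto (fun h : ℝ => f A h + f B h) (𝓝[>] (0:ℝ)) (𝓝 (1 + 1)) := hA'.add hB'
    have := ENNReal.Tendsto.sub h2 (tendsto_const_nhds (x := (1:ℝ≥0∞)))
      (Or.inr ENNReal.one_ne_top)
    simpa using this
  refine tendsto_of_tendsto_of_tendsto_of_le_of_le' hlow tendsto_const_nhds ?_ ?_
  · filter_upwards [self_mem_nhdsWithin] with h hh
    have hh' : (0:ℝ) < h := hh
    have hd0 : ENNReal.ofReal (2 * h) ≠ 0 := by simp [ENNReal.ofReal_pos]; linarith
    have hdt : ENNReal.ofReal (2 * h) ≠ ⊤ := ENNReal.ofReal_ne_top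
    rw [tsub_le_iff_right]
    set I := Icc (x - h) (x + h) with hI
    have hiu : volume (A ∩ I) + volume (B ∩ I)
        ≤ volume (A ∩ B ∩ I) + volume I := by
      have := measure_union_add_inter (μ := volume) (t := B ∩ I) (A ∩ I) (hB.1.inter measurableSet_Icc)
      have heq : A ∩ I ∩ (B ∩ I) = A ∩ B ∩ I := by
        rw [inter_inter_inter_comm, inter_self]
      rw [heq] at this
      calc volume (A ∩ I) + volume (B ∩ I) = volume (A ∩ I ∪ B ∩ I) + volume (A ∩ B ∩ I) :=
            this.symm
        _ ≤ volume I + volume (A ∩ B ∩ I) := by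
            gcongr
            exact union_subset inter_subset_right inter_subset_right
        _ = volume (A ∩ B ∩ I) + volume I := add_comm _ _
    calc f A h + f B h = (volume (A ∩ I) + volume (B ∩ I)) / ENNReal.ofReal (2 * h) :=
          ENNReal.div_add_div_same
      _ ≤ (volume (A ∩ B ∩ I) + volume I) / ENNReal.ofReal (2 * h) :=
          ENNReal.div_le_div_right hiu _
      _ = f (A ∩ B) h + volume I / ENNReal.ofReal (2 * h) := ENNReal.div_add_div_same.symm
      _ = f (A ∩ B) h + 1 := by rw [hI, vol_Icc, ENNReal.div_self hd0 hdt]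
  · filter_upwards [self_mem_nhdsWithin] with h hh
    have hh' : (0:ℝ) < h := hh
    have hd0 : ENNReal.ofReal (2 * h) ≠ 0 := by simp [ENNReal.ofReal_pos]; linarith
    have hdt : ENNReal.ofReal (2 * h) ≠ ⊤ := ENNReal.ofReal_ne_top
    calc f (A ∩ B) h ≤ ENNReal.ofReal (2 * h) / ENNReal.ofReal (2 * h) := by
          apply ENNReal.div_le_div_right
          rw [← vol_Icc x h]
          exact measure_mono inter_subset_right
      _ = 1 := ENNReal.div_self hd0 hdt

lemma densityOpen_diff_null {A Z : Set ℝ} (hA : DensityOpen A) (hZ : MeasurableSet Z)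
    (hZ0 : volume Z = 0) : DensityOpen (A \ Z) := by
  refine ⟨hA.1.diff hZ, fun x hx => ?_⟩
  have hae : A =ᵐ[volume] (A \ Z) :=
    ((diff_ae_eq_self (s := A) (t := Z)).2 (measure_mono_null (inter_subset_right : A ∩ Z ⊆ Z) hZ0)).symm
  exact isDensityPoint_congr hae (hA.2 x hx.1)

lemma densityOpen_sInter {S : Set (Set ℝ)} (hS : S.Finite)
    (h : ∀ v ∈ S, DensityOpen v) : DensityOpen (⋂₀ S) := by
  refine Set.Finite.induction_on_subset (motive := fun s _ => DensityOpen (⋂₀ s)) S hS (by simpa using densityOpen_univ) ?_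
  intro a s haS _ _ ih
  rw [sInter_insert]
  exact densityOpen_inter (h a haS) ih
/-- The density topology is countably orthocompact: every countable density-open
cover of ℝ has an interior-preserving density-open refinement. -/
theorem density_countably_orthocompact
    (U : ℕ → Set ℝ) (hU : ∀ n, DensityOpen (U n)) (hcov : (⋃ n, U n) = Set.univ) :
    ∃ V : Set (Set ℝ), (∀ v ∈ V, DensityOpen v) ∧ ⋃₀ V = Set.univ ∧
      (∀ v ∈ V, ∃ n, v ⊆ U n) ∧ (∀ W ⊆ V, DensityOpen (⋂₀ W)) := by
  classical
  set F : ℕ → Set ℝ := fun n => ⋃ m ≤ n, U m with hF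
  have hFmeas : ∀ n, MeasurableSet (F n) := fun n =>
    MeasurableSet.biUnion (Set.to_countable _) (fun m _ => (hU m).1)
  have hFmono : Monotone F := by
    intro a b hab y hy
    simp only [hF, mem_iUnion] at hy ⊢
    obtain ⟨m, hm, h⟩ := hy
    exact ⟨m, hm.trans hab, h⟩
  have hUF : ∀ m, U m ⊆ F m := by
    intro m x hx
    simp only [hF, mem_iUnion]
    exact ⟨m, le_rfl, hx⟩
  have hFcov : ∀ x : ℝ, ∃ n, x ∈ F n := by
    intro x
    have hx : x ∈ ⋃ n, U n := hcov ▸ mem_univ x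
    obtain ⟨n, hn⟩ := mem_iUnion.1 hx
    exact ⟨n, hUF n hn⟩
  -- closed (Euclidean) approximations of `F n` on bounded windows
  have hex : ∀ n k : ℕ, ∃ K, K ⊆ F n ∩ Ioo (-(k:ℝ)) k ∧ IsClosed K ∧
      volume ((F n ∩ Ioo (-(k:ℝ)) k) \ K) < (2:ℝ≥0∞)⁻¹ ^ n := by
    intro n k
    have hmeas : MeasurableSet (F n ∩ Ioo (-(k:ℝ)) k) := (hFmeas n).inter measurableSet_Ioo
    have hfin : volume (F n ∩ Ioo (-(k:ℝ)) k) ≠ ∞ := by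
      refine ne_of_lt (lt_of_le_of_lt (measure_mono inter_subset_right) ?_)
      rw [Real.volume_Ioo]; exact ENNReal.ofReal_lt_top
    exact hmeas.exists_isClosed_diff_lt hfin (pow_ne_zero _ (by simp))
  choose K hKsub hKcl hKlt using hex
  set Km : ℕ → Set ℝ := fun n => ⋃ j ∈ Finset.range n, ⋃ k ∈ Finset.range n, K j k with hKm
  set NN : Set ℝ := (⋃ j, ⋃ k, K j k)ᶜ with hNN
  have hKmcl : ∀ n, IsClosed (Km n) :=
    fun n => isClosed_biUnion_finset fun j _ => isClosed_biUnion_finset fun k _ => hKcl j k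
  have hNNmeas : MeasurableSet NN :=
    (MeasurableSet.iUnion fun j => MeasurableSet.iUnion fun k => (hKcl j k).measurableSet).compl
  -- NN is null
  have hNNIoo : ∀ k : ℕ, volume (NN ∩ Ioo (-(k:ℝ)) k) = 0 := by
    intro k
    have hb : ∀ n : ℕ, volume (NN ∩ Ioo (-(k:ℝ)) k)
        ≤ volume (Ioo (-(k:ℝ)) k \ F n) + (2:ℝ≥0∞)⁻¹ ^ n := by
      intro n
      have hsub : NN ∩ Ioo (-(k:ℝ)) k
          ⊆ (Ioo (-(k:ℝ)) k \ F n) ∪ ((F n ∩ Ioo (-(k:ℝ)) k) \ K n k) := by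
        rintro y ⟨hy1, hy2⟩
        by_cases hyF : y ∈ F n
        · exact Or.inr ⟨⟨hyF, hy2⟩, fun hyK => hy1 (mem_iUnion.2 ⟨n, mem_iUnion.2 ⟨k, hyK⟩⟩)⟩
        · exact Or.inl ⟨hy2, hyF⟩
      calc volume (NN ∩ Ioo (-(k:ℝ)) k)
          ≤ volume ((Ioo (-(k:ℝ)) k \ F n) ∪ ((F n ∩ Ioo (-(k:ℝ)) k) \ K n k)) :=
            measure_mono hsub
        _ ≤ volume (Ioo (-(k:ℝ)) k \ F n) + volume ((F n ∩ Ioo (-(k:ℝ)) k) \ K n k) :=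
            measure_union_le _ _
        _ ≤ volume (Ioo (-(k:ℝ)) k \ F n) + (2:ℝ≥0∞)⁻¹ ^ n := by
            gcongr
            exact (hKlt n k).le
    have htend : Tendsto (fun n : ℕ => volume (Ioo (-(k:ℝ)) k \ F n) + (2:ℝ≥0∞)⁻¹ ^ n)
        atTop (𝓝 0) := by
      have h1 : Tendsto (fun n : ℕ => volume (Ioo (-(k:ℝ)) k \ F n)) atTop (𝓝 0) := by
        have ht := tendsto_measure_iInter_atTop (μ := volume)
          (s := fun n => Ioo (-(k:ℝ)) k \ F n)
          (fun n => (measurableSet_Ioo.diff (hFmeas n)).nullMeasurableSet)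
          (fun a b hab => diff_subset_diff_right (hFmono hab))
          ⟨0, by
            refine ne_of_lt (lt_of_le_of_lt (measure_mono diff_subset) ?_)
            rw [Real.volume_Ioo]; exact ENNReal.ofReal_lt_top⟩
        have hint : ⋂ n, (Ioo (-(k:ℝ)) k \ F n) = ∅ := by
          apply eq_empty_iff_forall_notMem.2
          intro y hy
          obtain ⟨n, hn⟩ := hFcov y
          exact (mem_iInter.1 hy n).2 hn
        rw [hint] at ht
        simpa [Function.comp_def] using ht
      have h2 : Tendsto (fun n : ℕ => (2:ℝ≥0∞)⁻¹ ^ n) atTop (𝓝 0) :=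
        ENNReal.tendsto_pow_atTop_nhds_zero_of_lt_one (by simp)
      simpa using h1.add h2
    exact le_antisymm (ge_of_tendsto' htend hb) zero_le
  have hNNnull : volume NN = 0 := by
    have hsub : NN ⊆ ⋃ k : ℕ, NN ∩ Ioo (-(k:ℝ)) k := by
      intro y hy
      obtain ⟨k, hk⟩ := exists_nat_gt |y|
      have h1 := abs_lt.1 hk
      exact mem_iUnion.2 ⟨k, hy, h1.1, h1.2⟩
    exact measure_mono_null hsub (measure_iUnion_null hNNIoo)
  set Zm : ℕ → Set ℝ := fun n => NN ∩ ⋃ j ∈ Finset.range n, F j with hZm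
  set Cs : ℕ → Set ℝ := fun n => Km n ∪ Zm n with hCs
  have hKmmono : Monotone Km := by
    intro a b hab y hy
    simp only [hKm, mem_iUnion, Finset.mem_range] at hy ⊢
    obtain ⟨j, hj, k, hk, hyk⟩ := hy
    exact ⟨j, hj.trans_le hab, k, hk.trans_le hab, hyk⟩
  have hZmmono : Monotone Zm := by
    intro a b hab y hy
    refine ⟨hy.1, ?_⟩
    have h2 := hy.2
    simp only [mem_iUnion, Finset.mem_range] at h2 ⊢
    obtain ⟨j, hj, hyj⟩ := h2
    exact ⟨j, hj.trans_le hab, hyj⟩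
  have hCsmono : Monotone Cs := fun a b hab =>
    union_subset_union (hKmmono hab) (hZmmono hab)
  have hCssubF : ∀ n, Cs (n+1) ⊆ F n := by
    intro n y hy
    rcases hy with h | h
    · simp only [hKm, mem_iUnion, Finset.mem_range] at h
      obtain ⟨j, hj, k, _, hyk⟩ := h
      exact hFmono (Nat.lt_succ_iff.1 hj) (hKsub j k hyk).1
    · have h2 := h.2
      simp only [mem_iUnion, Finset.mem_range] at h2
      obtain ⟨j, hj, hyj⟩ := h2
      exact hFmono (Nat.lt_succ_iff.1 hj) hyj
  have hCscov : ∀ x : ℝ, ∃ n, x ∈ Cs n := by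
    intro x
    by_cases hx : x ∈ NN
    · obtain ⟨n, hn⟩ := hFcov x
      refine ⟨n + 1, Or.inr ⟨hx, ?_⟩⟩
      simp only [mem_iUnion, Finset.mem_range]
      exact ⟨n, Nat.lt_succ_self n, hn⟩
    · have hx' : x ∈ ⋃ j, ⋃ k, K j k := by
        by_contra hc
        exact hx hc
      simp only [mem_iUnion] at hx'
      obtain ⟨j, k, hjk⟩ := hx'
      refine ⟨max j k + 1, Or.inl ?_⟩
      simp only [hKm, mem_iUnion, Finset.mem_range]
      exact ⟨j, Nat.lt_succ_of_le (le_max_left j k), k, Nat.lt_succ_of_le (le_max_right j k), hjk⟩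
  have hCs0 : Cs 0 = ∅ := by
    simp [hCs, hKm, hZm]
  have hVopen : ∀ v : Set ℝ, (∃ n m : ℕ, m ≤ n ∧ v = U m \ Cs n) → DensityOpen v := by
    rintro v ⟨n, m, _, rfl⟩
    have heq : U m \ Cs n = (U m ∩ (Km n)ᶜ) \ Zm n := by
      rw [hCs]
      rw [diff_eq, compl_union, ← inter_assoc, ← diff_eq]
    rw [heq]
    refine densityOpen_diff_null
      (densityOpen_inter (hU m) (densityOpen_of_isOpen (hKmcl n).isOpen_compl)) ?_ ?_
    · exact hNNmeas.inter (MeasurableSet.biUnion (Set.to_countable _) fun j _ => hFmeas j)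
    · exact measure_mono_null inter_subset_left hNNnull
  refine ⟨{v | ∃ n m : ℕ, m ≤ n ∧ v = U m \ Cs n}, fun v hv => hVopen v hv, ?_, ?_, ?_⟩
  · -- covers
    refine eq_univ_iff_forall.2 fun x => ?_
    have hcx := hCscov x
    set n₀ := Nat.find hcx with hn₀
    have hx0 : x ∈ Cs n₀ := Nat.find_spec hcx
    have hne : n₀ ≠ 0 := by
      intro h
      rw [h, hCs0] at hx0
      exact hx0
    obtain ⟨n₁, hn₁⟩ := Nat.exists_eq_succ_of_ne_zero hne
    have hxF : x ∈ F n₁ := by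
      rw [hn₁] at hx0
      exact hCssubF n₁ hx0
    simp only [hF, mem_iUnion] at hxF
    obtain ⟨m, hm, hxU⟩ := hxF
    have hnot : x ∉ Cs n₁ := Nat.find_min hcx (by omega)
    exact mem_sUnion.2 ⟨U m \ Cs n₁, ⟨n₁, m, hm, rfl⟩, hxU, hnot⟩
  · -- refinement
    rintro v ⟨n, m, _, rfl⟩
    exact ⟨m, diff_subset⟩
  · -- interior-preserving
    intro W hW
    rcases eq_empty_or_nonempty (⋂₀ W) with he | ⟨x, hx⟩
    · rw [he]; exact densityOpen_empty
    · have hWfin : W.Finite := by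
        obtain ⟨k, hk⟩ := hCscov x
        have hsub : W ⊆ (fun p : ℕ × ℕ => U p.2 \ Cs p.1) '' (Iio k ×ˢ Iio k) := by
          intro v hv
          obtain ⟨n, m, hmn, rfl⟩ := hW hv
          have hxv : x ∈ U m \ Cs n := hx _ hv
          have hnk : n < k := by
            by_contra hnk
            push_neg at hnk
            exact hxv.2 (hCsmono hnk hk)
          exact ⟨(n, m), ⟨hnk, lt_of_le_of_lt hmn hnk⟩, rfl⟩
        exact Set.Finite.subset (((Set.finite_Iio k).prod (Set.finite_Iio k)).image _) hsub
      exact densityOpen_sInter hWfin fun v hv => hVopen v (hW hv)
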